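/- Define for d ≥ 2 and z ∈ (0, √d·π/2): σ²(z) = 1 − A(z)²/(1 − C(z)²), where A(z) = −√d cos^{d−1}(z/√d) sin(z/√d) and C(z) = cos^d(z/√d). Then for every fixed z > 0, lim_{d→∞} σ²(z) = (1 − (1 + z²) e^{−z²})/(1 − e^{−z²}). -/

import Mathlib

/-!
Put `x = z / √d`. Writing `sin x = x sinc x` and `cos x - 1 = -(x²/2) sinc (x/2)²`, continuity
of `sinc` at `0` gives `√d sin x → z` and `d (cos x - 1) → -z²/2`, hence
`cos x ^ d = (1 + (cos x - 1)) ^ d → e^{-z²/2}`, and the same for `cos x ^ (d - 1)`.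
So `A² → z² e^{-z²}` and `1 - C² → 1 - e^{-z²}`, which is nonzero since `z ≠ 0`.
-/

open Real Filter Topology

lemma tendsto_pow_sub_one_of_tendsto_pow {K : Type*} [DivisionRing K] [TopologicalSpace K]
    [T1Space K] [ContinuousMul K] [ContinuousInv₀ K] {f : ℕ → K} {a : K}
    (hf : Tendsto f atTop (𝓝 1)) (hpow : Tendsto (fun n => f n ^ n) atTop (𝓝 a)) :
    Tendsto (fun n => f n ^ (n - 1)) atTop (𝓝 a) := by
  have h := hpow.div hf one_ne_zero
  rw [div_one] at h
  refine h.congr' ?_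
  filter_upwards [hf.eventually_ne one_ne_zero, eventually_ge_atTop 1] with n hfn hn
  rw [pow_sub₀ _ hfn hn, pow_one, Pi.div_apply, div_eq_mul_inv]

namespace Real

lemma sin_eq_mul_sinc (x : ℝ) : sin x = x * sinc x := by
  rcases eq_or_ne x 0 with rfl | hx
  · simp
  · rw [sinc_of_ne_zero hx, mul_div_cancel₀ _ hx]

lemma cos_sub_one_eq_neg_mul_sinc_sq (x : ℝ) :
    cos x - 1 = -(x ^ 2 / 2) * sinc (x / 2) ^ 2 := by
  have h := cos_two_mul_eq_one_sub (x / 2)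
  rw [mul_div_cancel₀ x two_ne_zero, sin_eq_mul_sinc] at h
  rw [h]
  ring

lemma tendsto_div_sqrt_natCast (z : ℝ) : Tendsto (fun n : ℕ => z / √n) atTop (𝓝 0) :=
  tendsto_const_nhds.div_atTop (tendsto_sqrt_atTop.comp tendsto_natCast_atTop_atTop)

lemma tendsto_sqrt_mul_sin_div_sqrt (z : ℝ) :
    Tendsto (fun n : ℕ => √n * sin (z / √n)) atTop (𝓝 z) := by
  have h := ((continuous_sinc.tendsto 0).comp (tendsto_div_sqrt_natCast z)).const_mul z
  rw [sinc_zero, mul_one] at h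
  refine h.congr' ?_
  filter_upwards [eventually_ne_atTop 0] with n hn
  have : √(n : ℝ) ≠ 0 := by positivity
  rw [Function.comp_apply, sin_eq_mul_sinc]
  field_simp

lemma tendsto_natCast_mul_cos_div_sqrt_sub_one (z : ℝ) :
    Tendsto (fun n : ℕ => n * (cos (z / √n) - 1)) atTop (𝓝 (-(z ^ 2 / 2))) := by
  have hx : Tendsto (fun n : ℕ => z / √n / 2) atTop (𝓝 0) := by
    simpa using (tendsto_div_sqrt_natCast z).div_const 2
  have h := (((continuous_sinc.tendsto 0).comp hx).pow 2).const_mul (-(z ^ 2 / 2))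
  rw [sinc_zero, one_pow, mul_one] at h
  refine h.congr' ?_
  filter_upwards [eventually_ne_atTop 0] with n hn
  rw [Function.comp_apply, cos_sub_one_eq_neg_mul_sinc_sq, div_pow, sq_sqrt n.cast_nonneg]
  field_simp

lemma tendsto_cos_div_sqrt_pow (z : ℝ) :
    Tendsto (fun n : ℕ => cos (z / √n) ^ n) atTop (𝓝 (exp (-(z ^ 2 / 2)))) := by
  simpa using tendsto_one_add_pow_exp_of_tendsto (tendsto_natCast_mul_cos_div_sqrt_sub_one z)

end Real

/-- Limit of the conditional variance `σ²(z) = 1 - A²/(1-C²)` as `d → ∞`. -/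
theorem kostlan_sigma_sq_tendsto (z : ℝ) (hz : 0 < z) :
    Tendsto (fun d : ℕ =>
        1 - (-(Real.sqrt d) * Real.cos (z / Real.sqrt d) ^ (d - 1)
              * Real.sin (z / Real.sqrt d)) ^ 2
            / (1 - (Real.cos (z / Real.sqrt d) ^ d) ^ 2))
      atTop
      (nhds ((1 - (1 + z ^ 2) * Real.exp (-z ^ 2)) / (1 - Real.exp (-z ^ 2)))) := by
  have hcos : Tendsto (fun d : ℕ => cos (z / √d)) atTop (𝓝 1) := by
    have h := (continuous_cos.tendsto 0).comp (tendsto_div_sqrt_natCast z)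
    rwa [cos_zero] at h
  have hC := tendsto_cos_div_sqrt_pow z
  have hA := ((tendsto_sqrt_mul_sin_div_sqrt z).mul
    (tendsto_pow_sub_one_of_tendsto_pow hcos hC)).neg.pow 2
  have hexp : exp (-(z ^ 2 / 2)) ^ 2 = exp (-z ^ 2) := by
    rw [← exp_nat_mul]
    ring_nf
  have hden : 1 - exp (-z ^ 2) ≠ 0 := by
    exact (sub_pos.2 (exp_lt_one_iff.2 (neg_neg_of_pos (pow_pos hz 2)))).ne'
  convert (hA.div ((hexp ▸ hC.pow 2).const_sub 1) hden).const_sub 1 using 2 with d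
  · simp only [Pi.div_apply]
    ring
  · rw [neg_sq, mul_pow, hexp]
    field_simp
    ring
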